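/- Let F be a finite field with q elements and let k, s, t, d be integers with 1 ≤ k ≤ s ≤ t. Consider the map that sends a pair (A, B) of feature sets with |A| = t, |B| = s and |A △ B| = d to the pair of deterministic vault records (rec_k(A), rec_k(B)) ∈ F^{t−k} × F^{s−k}. The image of this map has cardinality at most q^{min(t+s−2k, t−k+d)}. (This is the counting content of Theorem 3: the entropy loss of a pair of vault records computed from feature sets at set difference d is at most min(t+s−2k, t−k+d)·log q.) -/

import Mathlib

open Polynomial Finset

/-- The characteristic polynomial of a finite subset `A` of a field:
`χ_A(X) = ∏_{a ∈ A} (X - a)`. -/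
noncomputable def charPoly {F : Type*} [Field F] (A : Finset F) : F[X] :=
  ∏ a ∈ A, (X - C a)

/-- The deterministic vault record of a feature set `A` of size `n` with
parameter `k`: the tuple of coefficients of `X^k, …, X^{n−1}` of `χ_A`. -/
noncomputable def vRec {F : Type*} [Field F] (n k : ℕ) (A : Finset F) :
    Fin (n - k) → F :=
  fun j => (charPoly A).coeff (k + (j : ℕ))

/-! The record of `A` determines `χ_A` up to a polynomial of degree `< k`. Writing
`χ_A = χ_{A ∩ B} χ_{A ∖ B}` and `χ_B = χ_{A ∩ B} χ_{B ∖ A}`, two pairs `(A, B)`, `(A', B')` with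
the same differences and the same record of `A` give
`χ_A - χ_{A'} = (χ_{A ∩ B} - χ_{A' ∩ B'}) χ_{A ∖ B}` of degree `< k`; when `|B ∖ A| ≤ |A ∖ B|`
(i.e. `|B| ≤ |A|`), then also `χ_B - χ_{B'} = (χ_{A ∩ B} - χ_{A' ∩ B'}) χ_{B ∖ A}` has degree
`< k`. So the pair of records is a function of `(rec_k(A), A ∖ B, B ∖ A)`, which takes at most
`q^{t-k} · C(q, |A ∖ B|) · C(q, |B ∖ A|) ≤ q^{t-k+d}` values. -/

theorem Set.ncard_image_le_of_mapsTo_of_factors {α β γ : Type*} {s : Set α} {t : Set γ}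
    {f : α → β} {g : α → γ} (hg : Set.MapsTo g s t)
    (hfg : ∀ a ∈ s, ∀ b ∈ s, g a = g b → f a = f b) (ht : t.Finite) :
    (f '' s).ncard ≤ t.ncard := by
  rcases s.eq_empty_or_nonempty with rfl | ⟨a, -⟩
  · simp
  have : Nonempty α := ⟨a⟩
  refine Set.ncard_le_ncard_of_injOn (g ∘ Function.invFunOn f s) ?_ ?_ ht
  · rintro _ ⟨b, hb, rfl⟩
    exact hg (Function.invFunOn_mem ⟨b, hb, rfl⟩)
  · rintro _ ⟨b, hb, rfl⟩ _ ⟨c, hc, rfl⟩ h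
    calc f b = f (Function.invFunOn f s (f b)) := (Function.invFunOn_eq ⟨b, hb, rfl⟩).symm
      _ = f (Function.invFunOn f s (f c)) :=
        hfg _ (Function.invFunOn_mem ⟨b, hb, rfl⟩) _ (Function.invFunOn_mem ⟨c, hc, rfl⟩) h
      _ = f c := Function.invFunOn_eq ⟨c, hc, rfl⟩

theorem Finset.card_symmDiff {α : Type*} [DecidableEq α] (A B : Finset α) :
    (symmDiff A B).card = (A \ B).card + (B \ A).card := by
  rw [symmDiff_def, sup_eq_union, card_union_of_disjoint disjoint_sdiff_sdiff]

theorem Finset.card_sdiff_eq_of_card_eq {α : Type*} [DecidableEq α] {A B A' B' : Finset α}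
    (hA : A.card = A'.card) (hB : B.card = B'.card)
    (hAB : (symmDiff A B).card = (symmDiff A' B').card) :
    (A \ B).card = (A' \ B').card ∧ (B \ A).card = (B' \ A').card := by
  have := card_sdiff_add_card A B
  have := card_sdiff_add_card B A
  have := card_sdiff_add_card A' B'
  have := card_sdiff_add_card B' A'
  rw [card_symmDiff, card_symmDiff] at hAB
  rw [union_comm B, union_comm B'] at *
  omega

theorem Polynomial.degree_mul_lt_of_degree_le {R : Type*} [Semiring R] [NoZeroDivisors R]
    {p q r : R[X]} {k : WithBot ℕ} (hpr : (p * r).degree < k) (hqr : q.degree ≤ r.degree) :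
    (p * q).degree < k := by
  rw [degree_mul] at hpr ⊢
  exact (add_le_add le_rfl hqr).trans_lt hpr

section charPoly

variable {F : Type*} [Field F]

theorem charPoly_monic (A : Finset F) : (charPoly A).Monic :=
  monic_prod_of_monic _ _ fun a _ => monic_X_sub_C a

theorem charPoly_natDegree (A : Finset F) : (charPoly A).natDegree = A.card := by
  rw [charPoly, natDegree_prod _ _ fun a _ => X_sub_C_ne_zero a]
  simp

theorem charPoly_degree (A : Finset F) : (charPoly A).degree = A.card := by
  rw [degree_eq_natDegree (charPoly_monic A).ne_zero, charPoly_natDegree]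

theorem charPoly_inter_mul_sdiff [DecidableEq F] (A B : Finset F) :
    charPoly (A ∩ B) * charPoly (A \ B) = charPoly A :=
  prod_inter_mul_prod_sdiff _ _ _

theorem vRec_eq_iff_degree_sub_lt {n k : ℕ} {A A' : Finset F} (hA : A.card = n)
    (hA' : A'.card = n) :
    vRec n k A = vRec n k A' ↔ (charPoly A - charPoly A').degree < k := by
  constructor
  · intro hv
    rw [degree_lt_iff_coeff_zero]
    intro j hkj
    rcases lt_or_ge j n with hjn | hnj
    · have := congrFun hv ⟨j - k, by omega⟩
      simp only [vRec, Nat.add_sub_cancel' hkj] at this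
      rw [coeff_sub, this, sub_self]
    · have hdeg : (charPoly A - charPoly A').degree < n := by
        have := degree_sub_lt_left (p := charPoly A) (q := charPoly A')
          (by rw [charPoly_degree, charPoly_degree, hA, hA']) (charPoly_monic A).ne_zero
          (by rw [(charPoly_monic A).leadingCoeff, (charPoly_monic A').leadingCoeff])
        rwa [charPoly_degree, hA] at this
      exact coeff_eq_zero_of_degree_lt (hdeg.trans_le (by exact_mod_cast hnj))
  · intro hdeg
    funext j
    have := coeff_eq_zero_of_degree_lt (hdeg.trans_le (by exact_mod_cast k.le_add_right j))
    rwa [coeff_sub, sub_eq_zero] at this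

theorem vRec_eq_of_sdiff_eq [DecidableEq F] {s t k : ℕ} {A B A' B' : Finset F}
    (hA : A.card = t) (hA' : A'.card = t) (hB : B.card = s) (hB' : B'.card = s)
    (hAB : A \ B = A' \ B') (hBA : B \ A = B' \ A') (hcard : (B \ A).card ≤ (A \ B).card)
    (hv : vRec t k A = vRec t k A') : vRec s k B = vRec s k B' := by
  rw [vRec_eq_iff_degree_sub_lt hA hA'] at hv
  rw [vRec_eq_iff_degree_sub_lt hB hB']
  rw [← charPoly_inter_mul_sdiff A B, ← charPoly_inter_mul_sdiff A' B', hAB, ← sub_mul] at hv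
  rw [← charPoly_inter_mul_sdiff B A, ← charPoly_inter_mul_sdiff B' A', hBA, ← sub_mul,
    inter_comm B, inter_comm B']
  refine degree_mul_lt_of_degree_le hv ?_
  rw [charPoly_degree, charPoly_degree, ← hBA, ← hAB]
  exact_mod_cast hcard

theorem ncard_image_vRec_pair_le [Fintype F] [DecidableEq F] {k s t d : ℕ} (hst : s ≤ t) :
    ((fun AB : Finset F × Finset F => (vRec t k AB.1, vRec s k AB.2)) ''
        {AB | AB.1.card = t ∧ AB.2.card = s ∧ (symmDiff AB.1 AB.2).card = d}).ncard
      ≤ Fintype.card F ^ (t - k + d) := by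
  set W := {AB : Finset F × Finset F | AB.1.card = t ∧ AB.2.card = s ∧
    (symmDiff AB.1 AB.2).card = d}
  rcases W.eq_empty_or_nonempty with hW | ⟨⟨A₀, B₀⟩, hA₀, hB₀, hd₀⟩
  · simp [hW]
  dsimp only at hA₀ hB₀ hd₀
  set d₁ := (A₀ \ B₀).card
  set d₂ := (B₀ \ A₀).card
  have hcards : ∀ A B : Finset F, A.card = t → B.card = s → (symmDiff A B).card = d →
      (A \ B).card = d₁ ∧ (B \ A).card = d₂ := fun A B hA hB hd =>
    card_sdiff_eq_of_card_eq (hA.trans hA₀.symm) (hB.trans hB₀.symm) (hd.trans hd₀.symm)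
  let T : Finset ((Fin (t - k) → F) × Finset F × Finset F) :=
    univ ×ˢ powersetCard d₁ univ ×ˢ powersetCard d₂ univ
  calc _ ≤ (T : Set ((Fin (t - k) → F) × Finset F × Finset F)).ncard := by
        refine Set.ncard_image_le_of_mapsTo_of_factors
          (g := fun AB => (vRec t k AB.1, AB.1 \ AB.2, AB.2 \ AB.1)) ?_ ?_ T.finite_toSet
        · rintro ⟨A, B⟩ ⟨hA, hB, hd⟩
          simp [T, hcards A B hA hB hd]
        · rintro ⟨A, B⟩ ⟨hA, hB, -⟩ ⟨A', B'⟩ ⟨hA', hB', -⟩ h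
          simp only [Prod.mk.injEq] at h ⊢
          obtain ⟨hv, hAB, hBA⟩ := h
          exact ⟨hv, vRec_eq_of_sdiff_eq hA hA' hB hB' hAB hBA
            (card_sdiff_le_card_sdiff_iff.2 (hA ▸ hB ▸ hst)) hv⟩
    _ = Fintype.card F ^ (t - k) * ((Fintype.card F).choose d₁ * (Fintype.card F).choose d₂) := by
        rw [Set.ncard_coe_finset, card_product, card_product, card_univ, Fintype.card_fun,
          Fintype.card_fin, card_powersetCard, card_powersetCard, card_univ]
    _ ≤ Fintype.card F ^ (t - k) * (Fintype.card F ^ d₁ * Fintype.card F ^ d₂) := by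
        gcongr <;> exact Nat.choose_le_pow _ _
    _ = Fintype.card F ^ (t - k + d) := by
        rw [← pow_add, ← pow_add, ← card_symmDiff, hd₀]

end charPoly

theorem stmt6_general {F : Type*} [Field F] [Fintype F] [DecidableEq F]
    (k s t d : ℕ) (hks : k ≤ s) (hst : s ≤ t) :
    Set.ncard { p : (Fin (t - k) → F) × (Fin (s - k) → F) |
        ∃ A B : Finset F, A.card = t ∧ B.card = s ∧ (symmDiff A B).card = d ∧
          p.1 = vRec t k A ∧ p.2 = vRec s k B }
      ≤ (Fintype.card F) ^ min (t + s - 2 * k) (t - k + d) := by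
  rw [(pow_right_mono₀ Fintype.card_pos).map_min]
  refine le_min ((Set.ncard_le_card _).trans_eq ?_) ((ncard_image_vRec_pair_le hst).trans' ?_)
  · rw [Nat.card_eq_fintype_card, Fintype.card_prod, Fintype.card_fun, Fintype.card_fun,
      Fintype.card_fin, Fintype.card_fin, ← pow_add]
    congr 1
    omega
  · refine (congrArg Set.ncard ?_).le
    ext ⟨v, w⟩
    simp [Prod.ext_iff, eq_comm, and_assoc]

/-- Counting content of Theorem 3: the image of the map sending a pair `(A, B)`
of feature sets of sizes `t`, `s` with `|A △ B| = d` to the pair of their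
deterministic vault records has cardinality at most
`q^{min(t+s−2k, t−k+d)}`. -/
theorem stmt6 {F : Type*} [Field F] [Fintype F] [DecidableEq F]
    (k s t d : ℕ) (hk : 1 ≤ k) (hks : k ≤ s) (hst : s ≤ t) :
    Set.ncard { p : (Fin (t - k) → F) × (Fin (s - k) → F) |
        ∃ A B : Finset F, A.card = t ∧ B.card = s ∧ (symmDiff A B).card = d ∧
          p.1 = vRec t k A ∧ p.2 = vRec s k B }
      ≤ (Fintype.card F) ^ min (t + s - 2 * k) (t - k + d) :=
  stmt6_general k s t d hks hst
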